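/- arXiv:1607.07060 — 2 statements merged into one kernel-verified Lean document; each statement's English description precedes it below -/
import Mathlib

section
/- The function det₂ on (n+1)-tuples of vectors in F₂ⁿ is multilinear: for each index i and vectors u, v ∈ F₂ⁿ, det₂(k₁,...,k_{i-1}, u+v, k_{i+1},...,k_{n+1}) = det₂(k₁,...,k_{i-1}, u, k_{i+1},...,k_{n+1}) + det₂(k₁,...,k_{i-1}, v, k_{i+1},...,k_{n+1}). -/
/-! Write the family as `i.insertNth x w` with `w = (kⱼ)_{j ≠ i}`. If `w` is a basis `b`, the
unique relation is `x + ∑ cⱼ wⱼ = 0` with `c = b.repr x`, so `det₂ = ∑ cⱼ`, which is linear in `x`.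
Otherwise a nonzero relation `g` among the `w` is a relation of the whole family for every `x`,
so `det₂` equals the constant `∑ gⱼ + 1` at those `x` which together with `span w` span `F₂ⁿ`,
and `0` elsewhere. Over `F₂` this set of `x` is empty or the complement of a hyperplane, and in
both cases its indicator is additive. -/

open Classical in
/-- The 2-determinant of `n+1` vectors in `F₂ⁿ`: equals `0` if the rank of the vectors
is less than `n`, and `∑ λᵢ + 1` for the unique nonzero relation `∑ λᵢ kᵢ = 0` otherwise. -/
noncomputable def det2 (n : ℕ) (k : Fin (n + 1) → Fin n → ZMod 2) : ZMod 2 :=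
  if h : Module.finrank (ZMod 2) (Submodule.span (ZMod 2) (Set.range k)) = n ∧
      ∃ lam : Fin (n + 1) → ZMod 2, lam ≠ 0 ∧ ∀ j, ∑ i, lam i * k i j = 0
  then (∑ i, h.2.choose i) + 1
  else 0

open Function Module Submodule

lemma zmod_two_eq_zero_or_eq_one (a : ZMod 2) : a = 0 ∨ a = 1 := by
  revert a; decide

section CharTwo

variable {V : Type*} [AddCommGroup V] [Module (ZMod 2) V]

lemma eq_of_ne_zero_of_finrank_eq_one (h : finrank (ZMod 2) V = 1) {x y : V}
    (hx : x ≠ 0) (hy : y ≠ 0) : x = y := by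
  obtain ⟨a, rfl⟩ := (finrank_eq_one_iff_of_nonzero' x hx).1 h y
  rcases zmod_two_eq_zero_or_eq_one a with rfl | rfl
  · simp at hy
  · simp

lemma add_mem_of_finrank_add_one_eq [FiniteDimensional (ZMod 2) V] {W : Submodule (ZMod 2) V}
    (hW : finrank (ZMod 2) W + 1 = finrank (ZMod 2) V) {x y : V} (hx : x ∉ W) (hy : y ∉ W) :
    x + y ∈ W := by
  have htop : W ⊔ span (ZMod 2) {x} = ⊤ :=
    eq_top_of_finrank_eq ((finrank_sup_span_singleton hx).trans hW)
  obtain ⟨w, hw, z, hz, rfl⟩ := mem_sup.1 (htop ▸ mem_top : y ∈ W ⊔ span (ZMod 2) {x})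
  obtain ⟨a, rfl⟩ := mem_span_singleton.1 hz
  rcases zmod_two_eq_zero_or_eq_one a with rfl | rfl
  · simp_all
  · simpa [add_left_comm x w, ZModModule.add_self] using hw

end CharTwo

lemma finrank_sup_span_singleton_eq_finrank_iff {K V : Type*} [Field K] [AddCommGroup V]
    [Module K V] [FiniteDimensional K V] {W : Submodule K V}
    (hW : finrank K W < finrank K V) (x : V) :
    finrank K ↥(W ⊔ span K {x}) = finrank K V ↔ finrank K W + 1 = finrank K V ∧ x ∉ W := by
  by_cases hx : x ∈ W
  · rw [sup_eq_left.2 ((span_singleton_le_iff_mem x W).2 hx)]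
    simp [hx, hW.ne]
  · simp [finrank_sup_span_singleton hx, hx]

lemma ite_finrank_sup_span_singleton_add {V : Type*} [AddCommGroup V] [Module (ZMod 2) V]
    [FiniteDimensional (ZMod 2) V] {W : Submodule (ZMod 2) V}
    (hW : finrank (ZMod 2) W < finrank (ZMod 2) V) (c : ZMod 2) (x y : V) :
    (if finrank (ZMod 2) ↥(W ⊔ span (ZMod 2) {x + y}) = finrank (ZMod 2) V then c else 0) =
      (if finrank (ZMod 2) ↥(W ⊔ span (ZMod 2) {x}) = finrank (ZMod 2) V then c else 0) +
      (if finrank (ZMod 2) ↥(W ⊔ span (ZMod 2) {y}) = finrank (ZMod 2) V then c else 0) := by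
  classical
  simp only [finrank_sup_span_singleton_eq_finrank_iff hW]
  by_cases hcodim : finrank (ZMod 2) W + 1 = finrank (ZMod 2) V
  · by_cases hx : x ∈ W <;> by_cases hy : y ∈ W
    · simp [hx, hy, W.add_mem hx hy]
    · simp [hx, hy, W.add_mem_iff_right hx]
    · simp [hx, hy, W.add_mem_iff_left hy]
    · simp [hx, hy, hcodim, add_mem_of_finrank_add_one_eq hcodim hx hy,
        ZModModule.add_self]
  · simp [hcodim]

lemma eq_of_sum_smul_eq_zero_of_card_eq_finrank_span_add_one {ι V : Type*} [Fintype ι]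
    [AddCommGroup V] [Module (ZMod 2) V] {k : ι → V}
    (hk : Fintype.card ι = finrank (ZMod 2) (span (ZMod 2) (Set.range k)) + 1)
    {lam mu : ι → ZMod 2} (hlam : lam ≠ 0) (hmu : mu ≠ 0)
    (hlam_rel : ∑ i, lam i • k i = 0) (hmu_rel : ∑ i, mu i • k i = 0) : lam = mu := by
  set L := Fintype.linearCombination (ZMod 2) k
  have hker : finrank (ZMod 2) (LinearMap.ker L) = 1 := by
    have := L.finrank_range_add_finrank_ker
    rw [Fintype.range_linearCombination, finrank_fintype_fun_eq_card] at this
    omega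
  have hlam_ker : lam ∈ LinearMap.ker L := by simpa [L, Fintype.linearCombination_apply]
  have hmu_ker : mu ∈ LinearMap.ker L := by simpa [L, Fintype.linearCombination_apply]
  simpa using eq_of_ne_zero_of_finrank_eq_one hker (x := ⟨lam, hlam_ker⟩) (y := ⟨mu, hmu_ker⟩)
    (by simpa using hlam) (by simpa using hmu)

lemma forall_sum_mul_apply_eq_zero_iff {R ι κ : Type*} [Semiring R] [Fintype ι]
    (lam : ι → R) (k : ι → κ → R) :
    (∀ j, ∑ i, lam i * k i j = 0) ↔ ∑ i, lam i • k i = 0 := by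
  simp [funext_iff, Finset.sum_apply]

lemma det2_eq_ite {n : ℕ} {k : Fin (n + 1) → Fin n → ZMod 2} {lam : Fin (n + 1) → ZMod 2}
    (hlam : lam ≠ 0) (hrel : ∑ i, lam i • k i = 0) :
    det2 n k =
      if finrank (ZMod 2) (span (ZMod 2) (Set.range k)) = n then ∑ i, lam i + 1 else 0 := by
  unfold det2
  split_ifs with h hrank hrank
  · obtain ⟨hmu, hmu_rel⟩ := h.2.choose_spec
    rw [eq_of_sum_smul_eq_zero_of_card_eq_finrank_span_add_one (by simp [hrank]) hmu hlam
      ((forall_sum_mul_apply_eq_zero_iff _ _).1 hmu_rel) hrel]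
  · exact absurd h.1 hrank
  · exact absurd ⟨hrank, lam, hlam, (forall_sum_mul_apply_eq_zero_iff _ _).2 hrel⟩ h
  · rfl

section InsertNth

variable {R M : Type*} [Semiring R] [AddCommMonoid M] [Module R M] {n : ℕ}

lemma sum_smul_insertNth (i : Fin (n + 1)) (a : R) (g : Fin n → R) (x : M) (v : Fin n → M) :
    ∑ j, (Fin.insertNth i a g : Fin (n + 1) → R) j • (Fin.insertNth i x v : Fin (n + 1) → M) j =
      a • x + ∑ j, g j • v j := by
  simp [Fin.sum_univ_succAbove _ i]

lemma span_range_insertNth (i : Fin (n + 1)) (x : M) (v : Fin n → M) :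
    span R (Set.range (Fin.insertNth i x v : Fin (n + 1) → M)) =
      span R (Set.range v) ⊔ span R {x} := by
  rw [Fin.range_insertNth]
  exact (span_insert x _).trans (sup_comm _ _)

end InsertNth

lemma det2_insertNth_eq_sum_repr {n : ℕ} (i : Fin (n + 1))
    (b : Basis (Fin n) (ZMod 2) (Fin n → ZMod 2)) (x : Fin n → ZMod 2) :
    det2 n (Fin.insertNth i x ⇑b) = ∑ j, b.repr x j := by
  have hrel : ∑ j, (Fin.insertNth i 1 ⇑(b.repr x) : Fin (n + 1) → ZMod 2) j •
      (Fin.insertNth i x ⇑b : Fin (n + 1) → Fin n → ZMod 2) j = 0 := by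
    rw [sum_smul_insertNth, one_smul, b.sum_repr, ZModModule.add_self]
  have hne : (Fin.insertNth i 1 ⇑(b.repr x) : Fin (n + 1) → ZMod 2) ≠ 0 := fun h ↦ by
    simpa using congrFun h i
  have hrank : finrank (ZMod 2)
      (span (ZMod 2) (Set.range (Fin.insertNth i x ⇑b : Fin (n + 1) → _))) = n := by
    rw [span_range_insertNth, b.span_eq, top_sup_eq, finrank_top, finrank_fin_fun]
  rw [det2_eq_ite hne hrel, if_pos hrank, Fin.sum_insertNth, add_right_comm,
    ZModModule.add_self, zero_add]

lemma det2_insertNth_add_of_not_linearIndependent {n : ℕ} (i : Fin (n + 1))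
    {w : Fin n → Fin n → ZMod 2} (hw : ¬LinearIndependent (ZMod 2) w) (x y : Fin n → ZMod 2) :
    det2 n (Fin.insertNth i (x + y) w) =
      det2 n (Fin.insertNth i x w) + det2 n (Fin.insertNth i y w) := by
  obtain ⟨g, hg, j, hj⟩ := Fintype.not_linearIndependent_iff.1 hw
  have hne : (Fin.insertNth i 0 g : Fin (n + 1) → ZMod 2) ≠ 0 := fun h ↦
    hj (by simpa using congrFun h (i.succAbove j))
  have hdet2 : ∀ z, det2 n (Fin.insertNth i z w) =
      if finrank (ZMod 2) ↥(span (ZMod 2) (Set.range w) ⊔ span (ZMod 2) {z}) = n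
      then ∑ j, g j + 1 else 0 := fun z ↦ by
    rw [det2_eq_ite hne (by rw [sum_smul_insertNth, zero_smul, zero_add, hg]),
      span_range_insertNth, Fin.sum_insertNth, zero_add]
  have hW : finrank (ZMod 2) (span (ZMod 2) (Set.range w)) <
      finrank (ZMod 2) (Fin n → ZMod 2) := by
    have hcard := linearIndependent_iff_card_eq_finrank_span.not.1 hw
    have hle := (span (ZMod 2) (Set.range w)).finrank_le
    simp only [Set.finrank, Fintype.card_fin, finrank_fin_fun] at hcard hle ⊢
    omega
  simpa only [hdet2, finrank_fin_fun] using
    ite_finrank_sup_span_singleton_add hW (∑ j, g j + 1) x y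

/-- `det₂` is multilinear: it is additive in each of its `n+1` arguments. -/
theorem det2_multilinear (n : ℕ) (k : Fin (n + 1) → Fin n → ZMod 2) (i : Fin (n + 1))
    (u v : Fin n → ZMod 2) :
    det2 n (Function.update k i (u + v)) =
      det2 n (Function.update k i u) + det2 n (Function.update k i v) := by
  simp only [← Fin.insertNth_removeNth]
  by_cases hw : LinearIndependent (ZMod 2) (i.removeNth k)
  · have hbasis :=
      det2_insertNth_eq_sum_repr i (basisOfLinearIndependentOfCardEqFinrank' _ hw (by simp))
    simp only [coe_basisOfLinearIndependentOfCardEqFinrank'] at hbasis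
    simp only [hbasis, map_add, Finsupp.add_apply, Finset.sum_add_distrib]
  · exact det2_insertNth_add_of_not_linearIndependent i hw u v
end

section
/- Let k₁,...,k_{n+1} ∈ F₂ⁿ be vectors such that for some m < n the subspace spanned by k₁,...,k_{m+1} has dimension m, and let π : F₂ⁿ → F₂ⁿ/span(k₁,...,k_{m+1}) ≅ F₂^{n−m} be the quotient projection. Then det₂(k₁,...,k_{n+1}) = det₂(k₁,...,k_{m+1}) · det(π(k_{m+2}),...,π(k_{n+1})), where the first factor is the 2-determinant of m+1 vectors in the m-dimensional space span(k₁,...,k_{m+1}) and the second is the ordinary determinant over F₂ of n−m vectors in F₂^{n−m}. -/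
/-!
Let `W` be the span of the first `m + 1` vectors. The whole family spans `F₂ⁿ` iff the last
`n - m` span `F₂ⁿ ⧸ W`, i.e. iff their determinant in `b` is a unit. If it is, `λ` extended by
zero is a nonzero relation among all `n + 1` vectors, the only one since they have rank `n`, so
`det₂ = ∑ λᵢ + 1`; otherwise both sides vanish.
-/

open Module Submodule Set

theorem ZMod.eq_zero_or_eq_one (x : ZMod 2) : x = 0 ∨ x = 1 := by decide +revert

theorem Module.Basis.isUnit_det_iff_span_eq_top {K M ι : Type*} [Field K] [AddCommGroup M]
    [Module K M] [Fintype ι] [DecidableEq ι] (b : Basis ι K M) (v : ι → M) :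
    IsUnit (b.det v) ↔ span K (range v) = ⊤ := by
  rw [← b.is_basis_iff_det]
  refine ⟨And.right, fun h => ⟨?_, h⟩⟩
  exact linearIndependent_of_top_le_span_of_card_eq_finrank h.ge (finrank_eq_card_basis b).symm

theorem Module.Basis.det_matrix_of_repr {K M ι : Type*} [CommRing K] [AddCommGroup M]
    [Module K M] [Fintype ι] [DecidableEq ι] (b : Basis ι K M) (v : ι → M) :
    (Matrix.of fun r c => b.repr (v r) c).det = b.det v := by
  rw [b.det_apply, ← Matrix.det_transpose]
  rfl

theorem span_range_sum_elim_eq_top_iff_isUnit_det {K V ι α : Type*} [Field K] [AddCommGroup V]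
    [Module K V] [Fintype ι] [DecidableEq ι] (f : α → V) (g : ι → V)
    (b : Basis ι K (V ⧸ span K (range f))) :
    span K (range (Sum.elim f g)) = ⊤ ↔ IsUnit (b.det ((span K (range f)).mkQ ∘ g)) := by
  rw [b.isUnit_det_iff_span_eq_top, range_comp, ← map_span, map_mkQ_eq_top, Sum.elim_range,
    span_union]

theorem ker_linearCombination_eq_span_singleton {K V ι : Type*} [Field K] [AddCommGroup V]
    [Module K V] [Fintype ι] {f : ι → V}
    (hrank : finrank K (span K (range f)) + 1 = Fintype.card ι)
    {c : ι → K} (hc : c ≠ 0) (hrel : Fintype.linearCombination K f c = 0) :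
    LinearMap.ker (Fintype.linearCombination K f) = K ∙ c := by
  refine (eq_of_le_of_finrank_eq ((span_singleton_le_iff_mem _ _).mpr hrel) ?_).symm
  have := LinearMap.finrank_range_add_finrank_ker (Fintype.linearCombination K f)
  rw [Fintype.range_linearCombination, finrank_fintype_fun_eq_card] at this
  rw [finrank_span_singleton hc]
  omega

theorem Fintype.linearCombination_eq_zero_iff {R ι n : Type*} [CommSemiring R] [Fintype ι]
    (v : ι → n → R) (c : ι → R) :
    Fintype.linearCombination R v c = 0 ↔ ∀ j, ∑ i, c i * v i j = 0 := by
  simp [Fintype.linearCombination_apply, funext_iff, Finset.sum_apply]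

theorem eq_of_linearCombination_eq_zero {V ι : Type*} [AddCommGroup V] [Module (ZMod 2) V]
    [Fintype ι] {f : ι → V}
    (hrank : finrank (ZMod 2) (span (ZMod 2) (range f)) + 1 = Fintype.card ι)
    {c d : ι → ZMod 2} (hc : c ≠ 0) (hd : d ≠ 0) (hcrel : Fintype.linearCombination _ f c = 0)
    (hdrel : Fintype.linearCombination _ f d = 0) : d = c := by
  have hmem : d ∈ ZMod 2 ∙ c := ker_linearCombination_eq_span_singleton hrank hc hcrel ▸ hdrel
  obtain ⟨a, rfl⟩ := mem_span_singleton.mp hmem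
  rcases a.eq_zero_or_eq_one with rfl | rfl
  · exact absurd (zero_smul _ c) hd
  · exact one_smul _ c

theorem det2_eq_zero_of_span_ne_top {n : ℕ} {k : Fin (n + 1) → Fin n → ZMod 2}
    (h : span (ZMod 2) (range k) ≠ ⊤) : det2 n k = 0 := by
  rw [det2, dif_neg]
  rintro ⟨hrank, -⟩
  exact h (eq_top_of_finrank_eq (by rw [hrank, finrank_fin_fun]))

theorem det2_eq_of_span_eq_top {n : ℕ} {k : Fin (n + 1) → Fin n → ZMod 2}
    (h : span (ZMod 2) (range k) = ⊤) {μ : Fin (n + 1) → ZMod 2} (hμ : μ ≠ 0)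
    (hrel : ∀ j, ∑ i, μ i * k i j = 0) : det2 n k = ∑ i, μ i + 1 := by
  have hrank : finrank (ZMod 2) (span (ZMod 2) (range k)) = n := by
    rw [h, finrank_top, finrank_fin_fun]
  have hcond : finrank (ZMod 2) (span (ZMod 2) (range k)) = n ∧
      ∃ μ : Fin (n + 1) → ZMod 2, μ ≠ 0 ∧ ∀ j, ∑ i, μ i * k i j = 0 := ⟨hrank, μ, hμ, hrel⟩
  obtain ⟨hne, hrel'⟩ := hcond.2.choose_spec
  rw [det2, dif_pos hcond]
  rw [← Fintype.linearCombination_eq_zero_iff] at hrel hrel'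
  rw [eq_of_linearCombination_eq_zero (by simp [hrank]) hμ hne hrel hrel']

def finSplitEquiv {m n : ℕ} (hm : m ≤ n) : Fin (m + 1) ⊕ Fin (n - m) ≃ Fin (n + 1) :=
  finSumFinEquiv.trans (finCongr (by omega))

@[simp]
theorem finSplitEquiv_inl {m n : ℕ} (hm : m ≤ n) (i : Fin (m + 1)) :
    finSplitEquiv hm (Sum.inl i) = Fin.castLE (by omega) i :=
  Fin.ext (by simp [finSplitEquiv])

@[simp]
theorem finSplitEquiv_inr {m n : ℕ} (hm : m ≤ n) (r : Fin (n - m)) :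
    finSplitEquiv hm (Sum.inr r) = ⟨m + 1 + r, by omega⟩ :=
  Fin.ext (by simp [finSplitEquiv])

/-- upper triangular block formula for `det₂`. If the first `m+1` of the vectors
`k₁,…,k_{n+1} ∈ F₂ⁿ` span an `m`-dimensional subspace (`m < n`), with unique nonzero relation
`∑ λᵢ kᵢ = 0`, then `det₂(k₁,…,k_{n+1})` equals the 2-determinant of the first `m+1` vectors
(i.e. `∑ λᵢ + 1`) times the ordinary `F₂`-determinant of the images of the remaining `n-m`
vectors in the quotient `F₂ⁿ / span(k₁,…,k_{m+1})`, computed in any basis `b` of the quotient. -/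
theorem det2_block (n m : ℕ) (hm : m < n) (k : Fin (n + 1) → Fin n → ZMod 2)
    (lam : Fin (m + 1) → ZMod 2) (hlam : lam ≠ 0)
    (hrel : ∀ j, ∑ i : Fin (m + 1), lam i * k (Fin.castLE (by omega) i) j = 0)
    (b : Module.Basis (Fin (n - m)) (ZMod 2) ((Fin n → ZMod 2) ⧸ Submodule.span (ZMod 2)
      (Set.range (fun i : Fin (m + 1) => k (Fin.castLE (by omega) i))))) :
    det2 n k = ((∑ i, lam i) + 1) *
      Matrix.det (Matrix.of fun (r c : Fin (n - m)) =>
        b.repr (Submodule.Quotient.mk (k ⟨m + 1 + (r : ℕ), by omega⟩)) c) := by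
  set e := finSplitEquiv hm.le
  rw [b.det_matrix_of_repr]
  have hk : k ∘ e = Sum.elim (fun i : Fin (m + 1) => k (Fin.castLE (by omega) i))
      (fun r : Fin (n - m) => k ⟨m + 1 + (r : ℕ), by omega⟩) := by
    ext (i | r) : 1 <;> simp [e]
  have hspan : span (ZMod 2) (range k) = ⊤ ↔
      IsUnit (b.det fun r => Submodule.Quotient.mk (k ⟨m + 1 + (r : ℕ), by omega⟩)) := by
    rw [← e.surjective.range_comp k, hk]
    exact span_range_sum_elim_eq_top_iff_isUnit_det _ _ b
  rcases (b.det _).eq_zero_or_eq_one with hdet | hdet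
  · rw [hdet, mul_zero]
    exact det2_eq_zero_of_span_ne_top fun h => by simpa [hdet] using hspan.mp h
  · rw [hdet, mul_one]
    let μ : Fin (n + 1) → ZMod 2 := Sum.elim lam 0 ∘ e.symm
    have hμ : μ ≠ 0 := fun h => hlam (funext fun i => by simpa [μ] using congrFun h (e (.inl i)))
    have hμrel : ∀ j, ∑ i, μ i * k i j = 0 := fun j => by
      rw [← e.sum_comp]
      simpa [μ, e, Fintype.sum_sum_type] using hrel j
    have hμsum : ∑ i, μ i = ∑ i, lam i := by
      simp [μ, e.symm.sum_comp (Sum.elim lam 0), Fintype.sum_sum_type]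
    rw [det2_eq_of_span_eq_top (hspan.mpr (by simp [hdet])) hμ hμrel, hμsum]
end
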